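/- arXiv:1105.3358 — 6 statements merged into one kernel-verified Lean document; each statement's English description precedes it below -/
import Mathlib

section
/- Let V : ℝ^d \ {0} → (0,∞) be C¹ and homogeneous of degree −α with α ∈ (0,2), and let x : (a,b) → ℝ^d \ {0} be a C² solution of ẍ = ∇V(x) satisfying ½|ẋ|² = V(x). Then the action satisfies ∫_a^b (½|ẋ(t)|² + V(x(t))) dt = (2/(2−α)) [x(t)·ẋ(t)]_a^b, i.e. A([a,b];x) = (1/α*)(x(b)·ẋ(b) − x(a)·ẋ(a)) with α* = (2−α)/2. -/
/-!
Along a zero-energy solution of `ẍ = ∇V(x)`, the Lagrange–Jacobi quantity `⟪x, ẋ⟫` has derivative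
`|ẋ|² + ⟪x, ∇V(x)⟫ = 2V(x) - αV(x)` by Euler's identity for the `(-α)`-homogeneous potential.
Since the Lagrangian `½|ẋ|² + V(x)` equals `2V(x)` at zero energy, the fundamental theorem of
calculus gives the action as `2 / (2 - α)` times the increment of `⟪x, ẋ⟫`.
-/

open Set intervalIntegral

open scoped RealInnerProductSpace

section Homogeneous

variable {E : Type*} [NormedAddCommGroup E]

theorem fderiv_apply_self_of_homogeneous [NormedSpace ℝ E] {V : E → ℝ} {α : ℝ} {y : E}
    (hV : DifferentiableAt ℝ V y) (hhom : ∀ l : ℝ, 0 < l → V (l • y) = l ^ (-α) * V y) :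
    fderiv ℝ V y y = -α * V y := by
  have hray : HasDerivAt (fun l : ℝ => l • y) y 1 := by
    simpa using (hasDerivAt_id (1 : ℝ)).smul_const y
  have hchain : HasDerivAt (fun l : ℝ => V (l • y)) (fderiv ℝ V y y) 1 := by
    have hF : HasFDerivAt V (fderiv ℝ V y) ((1 : ℝ) • y) := by simpa using hV.hasFDerivAt
    exact hF.comp_hasDerivAt 1 hray
  have hpow : HasDerivAt (fun l : ℝ => V (l • y)) (-α * V y) 1 := by
    have hrpow : HasDerivAt (fun l : ℝ => l ^ (-α) * V y) (-α * V y) 1 := by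
      simpa using ((Real.hasDerivAt_rpow_const (p := -α) (Or.inl one_ne_zero)).mul_const (V y))
    refine hrpow.congr_of_eventuallyEq ?_
    filter_upwards [eventually_gt_nhds one_pos] with l hl using hhom l hl
  exact hchain.unique hpow

variable [InnerProductSpace ℝ E] [CompleteSpace E]

theorem inner_gradient_of_homogeneous {V : E → ℝ} {α : ℝ} {y : E}
    (hV : DifferentiableAt ℝ V y) (hhom : ∀ l : ℝ, 0 < l → V (l • y) = l ^ (-α) * V y) :
    ⟪y, gradient V y⟫ = -α * V y := by
  rw [real_inner_comm, gradient, InnerProductSpace.toDual_symm_apply,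
    fderiv_apply_self_of_homogeneous hV hhom]

theorem hasDerivAt_inner_of_zero_energy {V : E → ℝ} {α : ℝ} {x x' : ℝ → E} {t : ℝ}
    (hx : HasDerivAt x (x' t) t) (hx' : HasDerivAt x' (gradient V (x t)) t)
    (hV : DifferentiableAt ℝ V (x t))
    (hhom : ∀ l : ℝ, 0 < l → V (l • x t) = l ^ (-α) * V (x t))
    (henergy : ‖x' t‖ ^ 2 / 2 = V (x t)) :
    HasDerivAt (fun s => ⟪x s, x' s⟫) ((2 - α) * V (x t)) t := by
  refine (hx.inner ℝ hx').congr_deriv ?_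
  rw [inner_gradient_of_homogeneous hV hhom, real_inner_self_eq_norm_sq]
  linarith

end Homogeneous

theorem stmt_6_general {d : ℕ} (α a b : ℝ) (hα : α ∈ Set.Ioo (0 : ℝ) 2) (hab : a < b)
    (V : EuclideanSpace ℝ (Fin d) → ℝ)
    (hV : ContDiffOn ℝ 1 V {x | x ≠ 0})
    (hhom : ∀ x : EuclideanSpace ℝ (Fin d), x ≠ 0 → ∀ l : ℝ, 0 < l →
      V (l • x) = l ^ (-α) * V x)
    (x x' : ℝ → EuclideanSpace ℝ (Fin d))
    (hx0 : ∀ t ∈ Set.Icc a b, x t ≠ 0)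
    (hx : ∀ t ∈ Set.Icc a b, HasDerivAt x (x' t) t)
    (hx' : ∀ t ∈ Set.Icc a b, HasDerivAt x' (gradient V (x t)) t)
    (henergy : ∀ t ∈ Set.Icc a b, ‖x' t‖ ^ 2 / 2 = V (x t)) :
    (∫ t in a..b, (‖x' t‖ ^ 2 / 2 + V (x t))) =
      (2 / (2 - α)) * ((inner ℝ (x b) (x' b) : ℝ) - (inner ℝ (x a) (x' a) : ℝ)) := by
  rw [← uIcc_of_le hab.le] at hx0 hx hx' henergy
  have hVdiff : ∀ t ∈ uIcc a b, DifferentiableAt ℝ V (x t) := fun t ht =>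
    (hV.contDiffAt (isOpen_compl_singleton.mem_nhds (hx0 t ht))).differentiableAt one_ne_zero
  have hVx : ContinuousOn (fun t => V (x t)) (uIcc a b) := fun t ht =>
    (hVdiff t ht).continuousAt.comp_continuousWithinAt (hx t ht).continuousAt.continuousWithinAt
  have hftc : ∫ t in a..b, (2 - α) * V (x t) = ⟪x b, x' b⟫ - ⟪x a, x' a⟫ :=
    integral_eq_sub_of_hasDerivAt
      (fun t ht => hasDerivAt_inner_of_zero_energy (hx t ht) (hx' t ht) (hVdiff t ht)
        (hhom (x t) (hx0 t ht)) (henergy t ht))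
      (hVx.intervalIntegrable.const_mul _)
  have hlagrangian : ∫ t in a..b, (‖x' t‖ ^ 2 / 2 + V (x t)) = ∫ t in a..b, 2 * V (x t) :=
    integral_congr fun t ht => by simp only [henergy t ht]; ring
  have hα2 : (2 : ℝ) - α ≠ 0 := by linarith [hα.2]
  rw [hlagrangian, ← hftc, integral_const_mul, integral_const_mul]
  field_simp

theorem stmt_6 {d : ℕ} (α a b : ℝ) (hα : α ∈ Set.Ioo (0 : ℝ) 2) (hab : a < b)
    (V : EuclideanSpace ℝ (Fin d) → ℝ)
    (hV : ContDiffOn ℝ 1 V {x | x ≠ 0})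
    (hVpos : ∀ x : EuclideanSpace ℝ (Fin d), x ≠ 0 → 0 < V x)
    (hhom : ∀ x : EuclideanSpace ℝ (Fin d), x ≠ 0 → ∀ l : ℝ, 0 < l →
      V (l • x) = l ^ (-α) * V x)
    (x x' : ℝ → EuclideanSpace ℝ (Fin d))
    (hx0 : ∀ t ∈ Set.Icc a b, x t ≠ 0)
    (hx : ∀ t ∈ Set.Icc a b, HasDerivAt x (x' t) t)
    (hx' : ∀ t ∈ Set.Icc a b, HasDerivAt x' (gradient V (x t)) t)
    (henergy : ∀ t ∈ Set.Icc a b, ‖x' t‖ ^ 2 / 2 = V (x t)) :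
    (∫ t in a..b, (‖x' t‖ ^ 2 / 2 + V (x t))) =
      (2 / (2 - α)) * ((inner ℝ (x b) (x' b) : ℝ) - (inner ℝ (x a) (x' a) : ℝ)) :=
  stmt_6_general α a b hα hab V hV hhom x x' hx0 hx hx' henergy
end

section
/- Let V be C¹ and homogeneous of degree −α, α ∈ (0,2), let V_min > 0 be the minimum of V on the unit sphere, and let x = r s (polar decomposition, r = |x|, s = x/|x|) be a C² zero-energy solution of ẍ = ∇V(x) on (a,b) with ṙ > 0 on (a,b]. Then the function φ(t) = ½ r(t)² ṙ(t)² − V_min r(t)^{2α*}, with α* = (2−α)/2, is nondecreasing on (a,b); indeed φ'(t) = 2α* r(t)^{1−α} (V(s(t)) − V_min) ṙ(t) ≥ 0. -/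
/-!
Differentiating `φ = r²ṙ²/2 - V_min r^{2α*}` gives `r ṙ³ + r² ṙ r̈ - 2α* V_min r^{1-α} ṙ`. Substituting the
radial equation for `r̈`, the first two terms become `α* r ṙ (ṙ² + r²|ṡ|²)`, and by the zero-energy
relation `ṙ² + r²|ṡ|² = 2 V(s) / r^α` this is `2α* r^{1-α} V(s) ṙ`. Hence
`φ' = 2α* r^{1-α} (V(s) - V_min) ṙ ≥ 0`, and `φ` is monotone by the mean value theorem.
-/

open Set

/-- The paper's `φ`, with `c` in place of `V_min` and `2 * ((2 - α) / 2)` for `2α*`. -/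
noncomputable def radialLyapunov (α c : ℝ) (r r' : ℝ → ℝ) (τ : ℝ) : ℝ :=
  r τ ^ 2 * r' τ ^ 2 / 2 - c * r τ ^ (2 * ((2 - α) / 2))

theorem mul_cube_add_sq_mul_accel_eq_of_zero_energy {α x v a q w : ℝ} (hx : 0 < x)
    (hode : a = -(α / 2) * v ^ 2 / x + ((2 - α) / 2) * q * x)
    (henergy : v ^ 2 / 2 + x ^ 2 * q / 2 = w / x ^ α) :
    x * v ^ 3 + x ^ 2 * v * a = 2 * ((2 - α) / 2) * x ^ (1 - α) * w * v := by
  have hxα : 0 < x ^ α := Real.rpow_pos_of_pos hx α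
  have hw : w = (v ^ 2 / 2 + x ^ 2 * q / 2) * x ^ α := by
    rw [henergy, div_mul_cancel₀ _ hxα.ne']
  have hsplit : x ^ (1 - α) * x ^ α = x := by
    rw [← Real.rpow_add hx, sub_add_cancel, Real.rpow_one]
  rw [hode, hw]
  field_simp
  linear_combination (-(2 - α) * (v * x ^ 2 * q + v ^ 3)) * hsplit

section

variable {α c t : ℝ} {r r' r'' : ℝ → ℝ}

theorem hasDerivAt_radialLyapunov (hr : HasDerivAt r (r' t) t) (hr' : HasDerivAt r' (r'' t) t)
    (hrt : 0 < r t) :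
    HasDerivAt (radialLyapunov α c r r')
      (r t * r' t ^ 3 + r t ^ 2 * r' t * r'' t - 2 * ((2 - α) / 2) * r t ^ (1 - α) * c * r' t) t := by
  have hpow := (hr.rpow_const (p := 2 * ((2 - α) / 2)) (Or.inl hrt.ne')).const_mul c
  rw [show 2 * ((2 - α) / 2) - 1 = 1 - α by ring] at hpow
  have h : HasDerivAt (radialLyapunov α c r r')
      ((2 * r t ^ 1 * r' t * r' t ^ 2 + r t ^ 2 * (2 * r' t ^ 1 * r'' t)) / 2 -
        c * (r' t * (2 * ((2 - α) / 2)) * r t ^ (1 - α))) t :=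
    (((hr.pow 2).mul (hr'.pow 2)).div_const 2).sub hpow
  exact h.congr_deriv (by ring)

theorem hasDerivAt_radialLyapunov_of_zero_energy {q W : ℝ → ℝ}
    (hr : HasDerivAt r (r' t) t) (hr' : HasDerivAt r' (r'' t) t) (hrt : 0 < r t)
    (hode : r'' t = -(α / 2) * (r' t) ^ 2 / r t + ((2 - α) / 2) * q t * r t)
    (henergy : (r' t) ^ 2 / 2 + (r t) ^ 2 * q t / 2 = W t / (r t) ^ α) :
    HasDerivAt (radialLyapunov α c r r')
      (2 * ((2 - α) / 2) * (r t) ^ (1 - α) * (W t - c) * (r' t)) t := by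
  convert hasDerivAt_radialLyapunov (c := c) hr hr' hrt using 1
  rw [mul_cube_add_sq_mul_accel_eq_of_zero_energy hrt hode henergy]
  ring

end

theorem stmt_7_general (α Vmin a b : ℝ) (hα : α ∈ Set.Ioo (0 : ℝ) 2)
    (r r' r'' q W : ℝ → ℝ)
    (hr : ∀ t ∈ Set.Ioo a b, HasDerivAt r (r' t) t)
    (hr' : ∀ t ∈ Set.Ioo a b, HasDerivAt r' (r'' t) t)
    (hrpos : ∀ t ∈ Set.Ioo a b, 0 < r t)
    (hr'pos : ∀ t ∈ Set.Ioo a b, 0 < r' t)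
    (hode : ∀ t ∈ Set.Ioo a b,
      r'' t = -(α / 2) * (r' t) ^ 2 / r t + ((2 - α) / 2) * q t * r t)
    (henergy : ∀ t ∈ Set.Ioo a b,
      (r' t) ^ 2 / 2 + (r t) ^ 2 * q t / 2 = W t / (r t) ^ α)
    (hW : ∀ t ∈ Set.Ioo a b, Vmin ≤ W t) :
    (∀ t ∈ Set.Ioo a b,
      HasDerivAt (fun τ => (r τ) ^ 2 * (r' τ) ^ 2 / 2 -
          Vmin * (r τ) ^ (2 * ((2 - α) / 2)))
        (2 * ((2 - α) / 2) * (r t) ^ (1 - α) * (W t - Vmin) * (r' t)) t ∧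
      0 ≤ 2 * ((2 - α) / 2) * (r t) ^ (1 - α) * (W t - Vmin) * (r' t)) ∧
    MonotoneOn (fun τ => (r τ) ^ 2 * (r' τ) ^ 2 / 2 -
        Vmin * (r τ) ^ (2 * ((2 - α) / 2))) (Set.Ioo a b) := by
  have hderiv : ∀ t ∈ Ioo a b, HasDerivAt (radialLyapunov α Vmin r r')
      (2 * ((2 - α) / 2) * (r t) ^ (1 - α) * (W t - Vmin) * (r' t)) t := fun t ht =>
    hasDerivAt_radialLyapunov_of_zero_energy (hr t ht) (hr' t ht) (hrpos t ht) (hode t ht)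
      (henergy t ht)
  have hnonneg : ∀ t ∈ Ioo a b,
      0 ≤ 2 * ((2 - α) / 2) * (r t) ^ (1 - α) * (W t - Vmin) * (r' t) := by
    intro t ht
    have hcoef : 0 ≤ 2 * ((2 - α) / 2) := by linarith [hα.2]
    have hpow : 0 ≤ r t ^ (1 - α) := (Real.rpow_pos_of_pos (hrpos t ht) _).le
    have hgap : 0 ≤ W t - Vmin := sub_nonneg.2 (hW t ht)
    exact mul_nonneg (mul_nonneg (mul_nonneg hcoef hpow) hgap) (hr'pos t ht).le
  refine ⟨fun t ht => ⟨hderiv t ht, hnonneg t ht⟩, ?_⟩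
  rw [← interior_Ioo] at hnonneg
  exact monotoneOn_of_hasDerivWithinAt_nonneg (convex_Ioo a b)
    (fun t ht => (hderiv t ht).continuousAt.continuousWithinAt)
    (fun t ht => (hderiv t (interior_subset ht)).hasDerivWithinAt) hnonneg

theorem stmt_7 (α Vmin a b : ℝ) (hα : α ∈ Set.Ioo (0 : ℝ) 2) (hVmin : 0 < Vmin)
    (hab : a < b)
    (r r' r'' q W : ℝ → ℝ)
    (hr : ∀ t ∈ Set.Ioo a b, HasDerivAt r (r' t) t)
    (hr' : ∀ t ∈ Set.Ioo a b, HasDerivAt r' (r'' t) t)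
    (hrpos : ∀ t ∈ Set.Ioo a b, 0 < r t)
    (hr'pos : ∀ t ∈ Set.Ioo a b, 0 < r' t)
    (hq : ∀ t ∈ Set.Ioo a b, 0 ≤ q t)
    (hode : ∀ t ∈ Set.Ioo a b,
      r'' t = -(α / 2) * (r' t) ^ 2 / r t + ((2 - α) / 2) * q t * r t)
    (henergy : ∀ t ∈ Set.Ioo a b,
      (r' t) ^ 2 / 2 + (r t) ^ 2 * q t / 2 = W t / (r t) ^ α)
    (hW : ∀ t ∈ Set.Ioo a b, Vmin ≤ W t) :
    (∀ t ∈ Set.Ioo a b,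
      HasDerivAt (fun τ => (r τ) ^ 2 * (r' τ) ^ 2 / 2 -
          Vmin * (r τ) ^ (2 * ((2 - α) / 2)))
        (2 * ((2 - α) / 2) * (r t) ^ (1 - α) * (W t - Vmin) * (r' t)) t ∧
      0 ≤ 2 * ((2 - α) / 2) * (r t) ^ (1 - α) * (W t - Vmin) * (r' t)) ∧
    MonotoneOn (fun τ => (r τ) ^ 2 * (r' τ) ^ 2 / 2 -
        Vmin * (r τ) ^ (2 * ((2 - α) / 2))) (Set.Ioo a b) :=
  stmt_7_general α Vmin a b hα r r' r'' q W hr hr' hrpos hr'pos hode henergy hW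
end

section
/- Under the assumptions of the previous monotonicity (x = rs a zero-energy solution with ṙ > 0 on (a,b], V ≥ V_min on the sphere, α* = (2−α)/2), if r(b) > r(a) then the action over [a,b] satisfies the two-sided bound: (√(2V_min)/α*) r(b)^{α*} − (1/α*) r(a) ṙ(a⁺) − (√(2V_min)/α*) r(a)^{2α*} / r(b)^{α*} ≤ A([a,b];x) ≤ (√(2V(s(b)))/α*) r(b)^{α*} − (1/α*) r(a) ṙ(a⁺). -/
/-!
Along a zero-energy solution the kinetic and potential parts of the Lagrangian are equal, and
the Lagrange–Jacobi identity gives `(r ṙ)' = α* L`. Hence the action over `[a, b]` is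
`(r ṙ)(b) - (r ṙ)(a)` divided by `α* = (2 - α) / 2`, and both bounds are bounds on `(r ṙ)(b)`.
From above, energy conservation gives `ṙ² ≤ 2 V / r^α`. From below, the function
`(r ṙ)² / 2 - V_min r^(2α*)` is nondecreasing when `ṙ ≥ 0` and `V ≥ V_min`, which yields
`(r ṙ)(b)² ≥ 2 V_min (r(b)^(2α*) - r(a)^(2α*))`; one concludes with
`√(A² - B²) ≥ A - B² / A`.
-/

open Set Real intervalIntegral

lemma sub_sq_div_le_sqrt_sq_sub_sq {A B : ℝ} (hA : 0 < A) : A - B ^ 2 / A ≤ √(A ^ 2 - B ^ 2) := by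
  rcases le_or_gt (A - B ^ 2 / A) 0 with h | h
  · exact h.trans (sqrt_nonneg _)
  · apply le_sqrt_of_sq_le
    have hB : B ^ 2 = B ^ 2 / A * A := by field_simp
    nlinarith [mul_nonneg (div_nonneg (sq_nonneg B) hA.le) h.le]

lemma rpow_two_mul_eq_sq {x : ℝ} (hx : 0 ≤ x) (y : ℝ) : x ^ (2 * y) = (x ^ y) ^ 2 := by
  rw [mul_comm, ← rpow_mul_natCast hx]
  norm_num

theorem integral_eq_sub_of_hasDerivAt_of_nonneg {f f' : ℝ → ℝ} {a b : ℝ} (hab : a ≤ b)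
    (hcont : ContinuousOn f (Icc a b)) (hderiv : ∀ t ∈ Ioo a b, HasDerivAt f (f' t) t)
    (hpos : ∀ t ∈ Ioo a b, 0 ≤ f' t) : ∫ t in a..b, f' t = f b - f a :=
  integral_eq_sub_of_hasDerivAt_of_le hab hcont hderiv <|
    (intervalIntegrable_iff_integrableOn_Ioc_of_le hab).2
      (integrableOn_deriv_of_nonneg hcont hderiv hpos)

/-- The Lagrange–Jacobi identity; `w` plays the role of `V(s) / r^α`. -/
theorem hasDerivAt_mul_deriv_of_energy {α t r'' q w : ℝ} {r r' : ℝ → ℝ}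
    (hr : HasDerivAt r (r' t) t) (hr' : HasDerivAt r' r'' t) (hpos : r t ≠ 0)
    (hode : r'' = -(α / 2) * r' t ^ 2 / r t + ((2 - α) / 2) * q * r t)
    (henergy : r' t ^ 2 / 2 + r t ^ 2 * q / 2 = w) :
    HasDerivAt (fun s => r s * r' s) ((2 - α) * w) t :=
  (hr.mul hr').congr_deriv <| by
    subst hode henergy
    field_simp
    ring

theorem mul_deriv_le_sqrt_mul_rpow {α r r' q W : ℝ} (hr : 0 < r) (hq : 0 ≤ q)
    (henergy : r' ^ 2 / 2 + r ^ 2 * q / 2 = W / r ^ α) :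
    r * r' ≤ √(2 * W) * r ^ ((2 - α) / 2) := by
  have hkin : r' ^ 2 ≤ 2 * (W / r ^ α) := by linarith [mul_nonneg (sq_nonneg r) hq]
  have hsq : (r ^ ((2 - α) / 2)) ^ 2 = r ^ 2 / r ^ α := by
    rw [← rpow_two_mul_eq_sq hr.le, show 2 * ((2 - α) / 2) = 2 - α by ring, rpow_sub hr, rpow_two]
  calc r * r' ≤ √(2 * W * (r ^ ((2 - α) / 2)) ^ 2) := by
        refine le_sqrt_of_sq_le ?_
        rw [hsq, mul_pow]
        calc r ^ 2 * r' ^ 2 ≤ r ^ 2 * (2 * (W / r ^ α)) := by gcongr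
          _ = 2 * W * (r ^ 2 / r ^ α) := by ring
    _ = √(2 * W) * r ^ ((2 - α) / 2) := by
        rw [sqrt_mul' _ (sq_nonneg _), sqrt_sq (rpow_nonneg hr.le _)]

section ZeroEnergy

variable {α V a b : ℝ} {r r' r'' q W : ℝ → ℝ}

theorem integral_lagrangian_eq (hα : α < 2) (hab : a ≤ b)
    (hr : ∀ t ∈ Icc a b, HasDerivAt r (r' t) t) (hr' : ∀ t ∈ Icc a b, HasDerivAt r' (r'' t) t)
    (hrpos : ∀ t ∈ Icc a b, 0 < r t) (hq : ∀ t ∈ Icc a b, 0 ≤ q t)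
    (hode : ∀ t ∈ Icc a b, r'' t = -(α / 2) * r' t ^ 2 / r t + ((2 - α) / 2) * q t * r t)
    (henergy : ∀ t ∈ Icc a b, r' t ^ 2 / 2 + r t ^ 2 * q t / 2 = W t / r t ^ α) :
    ∫ t in a..b, (r' t ^ 2 / 2 + r t ^ 2 * q t / 2 + W t / r t ^ α) =
      (r b * r' b - r a * r' a) / ((2 - α) / 2) := by
  have hderiv : ∀ t ∈ Icc a b,
      HasDerivAt (fun s => r s * r' s) ((2 - α) * (W t / r t ^ α)) t := fun t ht =>
    hasDerivAt_mul_deriv_of_energy (hr t ht) (hr' t ht) (hrpos t ht).ne' (hode t ht) (henergy t ht)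
  have hpos : ∀ t ∈ Ioo a b, 0 ≤ (2 - α) * (W t / r t ^ α) := fun t ht => by
    have hqt := hq t (Ioo_subset_Icc_self ht)
    rw [← henergy t (Ioo_subset_Icc_self ht)]
    have : 0 ≤ 2 - α := by linarith
    positivity
  rw [← integral_eq_sub_of_hasDerivAt_of_nonneg hab (HasDerivAt.continuousOn hderiv)
    (fun t ht => hderiv t (Ioo_subset_Icc_self ht)) hpos, ← integral_div]
  refine integral_congr fun t ht => ?_
  rw [uIcc_of_le hab] at ht
  rw [← henergy t ht]
  have : 2 - α ≠ 0 := by linarith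
  field_simp
  ring

theorem monotoneOn_sq_mul_deriv_sub_rpow (hα : α ≤ 2)
    (hr : ∀ t ∈ Icc a b, HasDerivAt r (r' t) t) (hr' : ∀ t ∈ Icc a b, HasDerivAt r' (r'' t) t)
    (hrpos : ∀ t ∈ Icc a b, 0 < r t)
    (hode : ∀ t ∈ Icc a b, r'' t = -(α / 2) * r' t ^ 2 / r t + ((2 - α) / 2) * q t * r t)
    (henergy : ∀ t ∈ Icc a b, r' t ^ 2 / 2 + r t ^ 2 * q t / 2 = W t / r t ^ α)
    (hW : ∀ t ∈ Icc a b, V ≤ W t) (hr'nonneg : ∀ t ∈ Ioo a b, 0 ≤ r' t) :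
    MonotoneOn (fun t => (r t * r' t) ^ 2 / 2 - V * r t ^ (2 * ((2 - α) / 2))) (Icc a b) := by
  have hderiv : ∀ t ∈ Icc a b, HasDerivAt
      (fun t => (r t * r' t) ^ 2 / 2 - V * r t ^ (2 * ((2 - α) / 2)))
      ((2 - α) * r' t * (r t / r t ^ α) * (W t - V)) t := by
    intro t ht
    have hrt := hrpos t ht
    have hmul := hasDerivAt_mul_deriv_of_energy (hr t ht) (hr' t ht) hrt.ne' (hode t ht)
      (henergy t ht)
    refine (((hmul.pow 2).div_const 2).sub
      (((hr t ht).rpow_const (Or.inl hrt.ne')).const_mul V)).congr_deriv ?_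
    rw [show 2 * ((2 - α) / 2) - 1 = 1 - α by ring, rpow_sub hrt, rpow_one]
    push_cast
    ring
  refine monotoneOn_of_hasDerivWithinAt_nonneg (convex_Icc a b) (HasDerivAt.continuousOn hderiv)
    (fun t ht => (hderiv t (interior_subset ht)).hasDerivWithinAt) fun t ht => ?_
  rw [interior_Icc] at ht
  have hrt := hrpos t (Ioo_subset_Icc_self ht)
  have hWt := hW t (Ioo_subset_Icc_self ht)
  have hr't := hr'nonneg t ht
  have : 0 ≤ 2 - α := by linarith
  have : 0 ≤ W t - V := by linarith
  positivity

theorem sqrt_mul_sub_le_mul_deriv (hα : α ≤ 2) (hV : 0 ≤ V) (hab : a < b)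
    (hr : ∀ t ∈ Icc a b, HasDerivAt r (r' t) t) (hr' : ∀ t ∈ Icc a b, HasDerivAt r' (r'' t) t)
    (hrpos : ∀ t ∈ Icc a b, 0 < r t)
    (hode : ∀ t ∈ Icc a b, r'' t = -(α / 2) * r' t ^ 2 / r t + ((2 - α) / 2) * q t * r t)
    (henergy : ∀ t ∈ Icc a b, r' t ^ 2 / 2 + r t ^ 2 * q t / 2 = W t / r t ^ α)
    (hW : ∀ t ∈ Icc a b, V ≤ W t) (hr'nonneg : ∀ t ∈ Ioc a b, 0 ≤ r' t) :
    √(2 * V) * (r b ^ ((2 - α) / 2) - r a ^ (2 * ((2 - α) / 2)) / r b ^ ((2 - α) / 2)) ≤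
      r b * r' b := by
  have hmono : _ ≤ _ := monotoneOn_sq_mul_deriv_sub_rpow hα hr hr' hrpos hode henergy hW
    (fun t ht => hr'nonneg t (Ioo_subset_Ioc_self ht)) (left_mem_Icc.2 hab.le)
    (right_mem_Icc.2 hab.le) hab.le
  have hra := (hrpos a (left_mem_Icc.2 hab.le)).le
  have hrb := hrpos b (right_mem_Icc.2 hab.le)
  set s := (2 - α) / 2
  dsimp only at hmono
  rw [rpow_two_mul_eq_sq hra, rpow_two_mul_eq_sq hrb.le] at hmono
  have hsq : 2 * V * ((r b ^ s) ^ 2 - (r a ^ s) ^ 2) ≤ (r b * r' b) ^ 2 := by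
    nlinarith [sq_nonneg (r a * r' a)]
  have hGb : 0 ≤ r b * r' b := mul_nonneg hrb.le (hr'nonneg b (right_mem_Ioc.2 hab))
  rw [rpow_two_mul_eq_sq hra]
  calc √(2 * V) * (r b ^ s - (r a ^ s) ^ 2 / r b ^ s)
      ≤ √(2 * V) * √((r b ^ s) ^ 2 - (r a ^ s) ^ 2) := by
        gcongr
        exact sub_sq_div_le_sqrt_sq_sub_sq (rpow_pos_of_pos hrb s)
    _ = √(2 * V * ((r b ^ s) ^ 2 - (r a ^ s) ^ 2)) := (sqrt_mul (by positivity) _).symm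
    _ ≤ r b * r' b := (sqrt_le_left hGb).2 hsq

end ZeroEnergy

theorem stmt_8_general (α Vmin a b : ℝ) (hα : α ∈ Set.Ioo (0 : ℝ) 2) (hVmin : 0 < Vmin)
    (hab : a < b)
    (r r' r'' q W : ℝ → ℝ)
    (hr : ∀ t ∈ Set.Icc a b, HasDerivAt r (r' t) t)
    (hr' : ∀ t ∈ Set.Icc a b, HasDerivAt r' (r'' t) t)
    (hrpos : ∀ t ∈ Set.Icc a b, 0 < r t)
    (hq : ∀ t ∈ Set.Icc a b, 0 ≤ q t)
    (hode : ∀ t ∈ Set.Icc a b,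
      r'' t = -(α / 2) * (r' t) ^ 2 / r t + ((2 - α) / 2) * q t * r t)
    (henergy : ∀ t ∈ Set.Icc a b,
      (r' t) ^ 2 / 2 + (r t) ^ 2 * q t / 2 = W t / (r t) ^ α)
    (hW : ∀ t ∈ Set.Icc a b, Vmin ≤ W t)
    (hr'pos : ∀ t ∈ Set.Ioc a b, 0 < r' t) :
    Real.sqrt (2 * Vmin) / ((2 - α) / 2) * (r b) ^ ((2 - α) / 2) -
        (1 / ((2 - α) / 2)) * (r a * r' a) -
        Real.sqrt (2 * Vmin) / ((2 - α) / 2) *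
          ((r a) ^ (2 * ((2 - α) / 2)) / (r b) ^ ((2 - α) / 2)) ≤
      (∫ t in a..b, ((r' t) ^ 2 / 2 + (r t) ^ 2 * q t / 2 + W t / (r t) ^ α)) ∧
    (∫ t in a..b, ((r' t) ^ 2 / 2 + (r t) ^ 2 * q t / 2 + W t / (r t) ^ α)) ≤
      Real.sqrt (2 * W b) / ((2 - α) / 2) * (r b) ^ ((2 - α) / 2) -
        (1 / ((2 - α) / 2)) * (r a * r' a) := by
  have hs : 0 < (2 - α) / 2 := by linarith [hα.2]
  have hb : b ∈ Icc a b := right_mem_Icc.2 hab.le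
  have hr'nonneg : ∀ t ∈ Ioc a b, 0 ≤ r' t := fun t ht => (hr'pos t ht).le
  have hlower := sqrt_mul_sub_le_mul_deriv hα.2.le hVmin.le hab hr hr' hrpos hode henergy hW
    hr'nonneg
  have hupper := mul_deriv_le_sqrt_mul_rpow (hrpos b hb) (hq b hb) (henergy b hb)
  rw [integral_lagrangian_eq hα.2 hab.le hr hr' hrpos hq hode henergy]
  constructor
  · calc _ = (√(2 * Vmin) * (r b ^ ((2 - α) / 2) - r a ^ (2 * ((2 - α) / 2)) /
            r b ^ ((2 - α) / 2)) - r a * r' a) / ((2 - α) / 2) := by ring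
      _ ≤ _ := by gcongr
  · calc _ ≤ (√(2 * W b) * r b ^ ((2 - α) / 2) - r a * r' a) / ((2 - α) / 2) := by gcongr
      _ = _ := by ring

theorem stmt_8 (α Vmin a b : ℝ) (hα : α ∈ Set.Ioo (0 : ℝ) 2) (hVmin : 0 < Vmin)
    (hab : a < b)
    (r r' r'' q W : ℝ → ℝ)
    (hr : ∀ t ∈ Set.Icc a b, HasDerivAt r (r' t) t)
    (hr' : ∀ t ∈ Set.Icc a b, HasDerivAt r' (r'' t) t)
    (hrpos : ∀ t ∈ Set.Icc a b, 0 < r t)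
    (hq : ∀ t ∈ Set.Icc a b, 0 ≤ q t)
    (hode : ∀ t ∈ Set.Icc a b,
      r'' t = -(α / 2) * (r' t) ^ 2 / r t + ((2 - α) / 2) * q t * r t)
    (henergy : ∀ t ∈ Set.Icc a b,
      (r' t) ^ 2 / 2 + (r t) ^ 2 * q t / 2 = W t / (r t) ^ α)
    (hW : ∀ t ∈ Set.Icc a b, Vmin ≤ W t)
    (hr'pos : ∀ t ∈ Set.Ioc a b, 0 < r' t)
    (hr'a : 0 ≤ r' a)
    (hrab : r a < r b) :
    Real.sqrt (2 * Vmin) / ((2 - α) / 2) * (r b) ^ ((2 - α) / 2) -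
        (1 / ((2 - α) / 2)) * (r a * r' a) -
        Real.sqrt (2 * Vmin) / ((2 - α) / 2) *
          ((r a) ^ (2 * ((2 - α) / 2)) / (r b) ^ ((2 - α) / 2)) ≤
      (∫ t in a..b, ((r' t) ^ 2 / 2 + (r t) ^ 2 * q t / 2 + W t / (r t) ^ α)) ∧
    (∫ t in a..b, ((r' t) ^ 2 / 2 + (r t) ^ 2 * q t / 2 + W t / (r t) ^ α)) ≤
      Real.sqrt (2 * W b) / ((2 - α) / 2) * (r b) ^ ((2 - α) / 2) -
        (1 / ((2 - α) / 2)) * (r a * r' a) :=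
  stmt_8_general α Vmin a b hα hVmin hab r r' r'' q W hr hr' hrpos hq hode henergy hW hr'pos
end

section
/- Let U : ℝ → ℝ be C¹, 2π-periodic, with U(ϑ) ≥ U_min > 0 for all ϑ, and let α ∈ (0,2). Consider a solution (ϑ(τ), φ(τ)) of the planar system ϑ' = 2U(ϑ) sin(φ−ϑ), φ' = U'(ϑ)cos(φ−ϑ) + αU(ϑ) sin(φ−ϑ). Then the function v(τ) = √(U(ϑ(τ))) cos(φ(τ)−ϑ(τ)) satisfies v'(τ) = (2−α) √(U(ϑ(τ))) (U(ϑ(τ)) − v(τ)²); in particular v is nondecreasing along solutions (since v² ≤ U(ϑ) always). -/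
/-! The quantity `v = √U(ϑ) cos(φ - ϑ)` is the radial momentum in McGehee coordinates. Differentiating
it along the flow, the two terms carrying `U'(ϑ)` (one from `√U(ϑ)`, one from `φ'`) cancel, and what
remains is `(2 - α) √U(ϑ) · U(ϑ) sin²(φ - ϑ) = (2 - α) √U(ϑ) (U(ϑ) - v²)`, which is nonnegative for
`α ≤ 2` because `v² ≤ U(ϑ)`. -/

open Real

lemma sq_sqrt_mul_cos_le {u : ℝ} (hu : 0 ≤ u) (x : ℝ) : (√u * cos x) ^ 2 ≤ u := by
  rw [mul_pow, sq_sqrt hu]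
  exact mul_le_of_le_one_right hu (cos_sq_le_one x)

lemma mcgehee_deriv_eq (α s dU x : ℝ) (hs : s ≠ 0) :
    1 / (2 * s) * (dU * (2 * s ^ 2 * sin x)) * cos x +
        s * (-sin x * ((dU * cos x + α * s ^ 2 * sin x) - 2 * s ^ 2 * sin x)) =
      (2 - α) * s * (s ^ 2 - (s * cos x) ^ 2) := by
  have hfirst : 1 / (2 * s) * (dU * (2 * s ^ 2 * sin x)) = dU * s * sin x := by
    field_simp
  rw [hfirst]
  linear_combination (2 - α) * s ^ 3 * sin_sq_add_cos_sq x

theorem hasDerivAt_sqrt_mul_cos_sub {α : ℝ} {U θ φ : ℝ → ℝ} {τ : ℝ}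
    (hU : DifferentiableAt ℝ U (θ τ)) (hpos : 0 < U (θ τ))
    (hθ : HasDerivAt θ (2 * U (θ τ) * sin (φ τ - θ τ)) τ)
    (hφ : HasDerivAt φ
      (deriv U (θ τ) * cos (φ τ - θ τ) + α * U (θ τ) * sin (φ τ - θ τ)) τ) :
    HasDerivAt (fun τ => √(U (θ τ)) * cos (φ τ - θ τ))
      ((2 - α) * √(U (θ τ)) * (U (θ τ) - (√(U (θ τ)) * cos (φ τ - θ τ)) ^ 2)) τ := by
  have hsqrt := (hasDerivAt_sqrt hpos.ne').comp τ (hU.hasDerivAt.comp τ hθ)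
  have hcos := (hasDerivAt_cos (φ τ - θ τ)).comp τ (hφ.sub hθ)
  refine (hsqrt.mul hcos).congr_deriv ?_
  have hs : √(U (θ τ)) ^ 2 = U (θ τ) := sq_sqrt hpos.le
  rw [← hs, sqrt_sq (sqrt_nonneg _)]
  dsimp only [Function.comp_apply, Pi.sub_apply]
  exact mcgehee_deriv_eq α _ _ _ (sqrt_pos.mpr hpos).ne'

theorem stmt_10_general (α Umin : ℝ) (hα : α ∈ Set.Ioo (0 : ℝ) 2) (hUmin : 0 < Umin)
    (U : ℝ → ℝ) (hU : ContDiff ℝ 1 U)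
    (hUb : ∀ ϑ, Umin ≤ U ϑ)
    (θ φ : ℝ → ℝ)
    (hθ : ∀ τ, HasDerivAt θ (2 * U (θ τ) * Real.sin (φ τ - θ τ)) τ)
    (hφ : ∀ τ, HasDerivAt φ
      (deriv U (θ τ) * Real.cos (φ τ - θ τ) + α * U (θ τ) * Real.sin (φ τ - θ τ)) τ) :
    (∀ τ, HasDerivAt (fun τ => Real.sqrt (U (θ τ)) * Real.cos (φ τ - θ τ))
      ((2 - α) * Real.sqrt (U (θ τ)) *
        (U (θ τ) - (Real.sqrt (U (θ τ)) * Real.cos (φ τ - θ τ)) ^ 2)) τ) ∧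
    Monotone (fun τ => Real.sqrt (U (θ τ)) * Real.cos (φ τ - θ τ)) := by
  have hpos : ∀ x, 0 < U x := fun x => hUmin.trans_le (hUb x)
  have hderiv : ∀ τ, HasDerivAt (fun τ => √(U (θ τ)) * cos (φ τ - θ τ))
      ((2 - α) * √(U (θ τ)) * (U (θ τ) - (√(U (θ τ)) * cos (φ τ - θ τ)) ^ 2)) τ :=
    fun τ => hasDerivAt_sqrt_mul_cos_sub
      ((hU.differentiable one_ne_zero) (θ τ)) (hpos _) (hθ τ) (hφ τ)
  refine ⟨hderiv, monotone_of_deriv_nonneg (fun τ => (hderiv τ).differentiableAt) fun τ => ?_⟩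
  rw [(hderiv τ).deriv]
  have h2α : 0 ≤ 2 - α := by linarith [hα.2]
  exact mul_nonneg (mul_nonneg h2α (sqrt_nonneg _))
    (sub_nonneg.mpr (sq_sqrt_mul_cos_le (hpos _).le _))

theorem stmt_10 (α Umin : ℝ) (hα : α ∈ Set.Ioo (0 : ℝ) 2) (hUmin : 0 < Umin)
    (U : ℝ → ℝ) (hU : ContDiff ℝ 1 U) (hper : Function.Periodic U (2 * Real.pi))
    (hUb : ∀ ϑ, Umin ≤ U ϑ)
    (θ φ : ℝ → ℝ)
    (hθ : ∀ τ, HasDerivAt θ (2 * U (θ τ) * Real.sin (φ τ - θ τ)) τ)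
    (hφ : ∀ τ, HasDerivAt φ
      (deriv U (θ τ) * Real.cos (φ τ - θ τ) + α * U (θ τ) * Real.sin (φ τ - θ τ)) τ) :
    (∀ τ, HasDerivAt (fun τ => Real.sqrt (U (θ τ)) * Real.cos (φ τ - θ τ))
      ((2 - α) * Real.sqrt (U (θ τ)) *
        (U (θ τ) - (Real.sqrt (U (θ τ)) * Real.cos (φ τ - θ τ)) ^ 2)) τ) ∧
    Monotone (fun τ => Real.sqrt (U (θ τ)) * Real.cos (φ τ - θ τ)) :=
  stmt_10_general α Umin hα hUmin U hU hUb θ φ hθ hφ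
end

section
/- Let U, α, and the planar system be as above, with U_min ≤ U(ϑ) ≤ U_max. Suppose (ϑ(τ), φ(τ)) is a solution on which v(τ) = √(U(ϑ)) cos(φ−ϑ) strictly increases from −√(U_min) to √(U_min) while ϑ is strictly monotone increasing from ξ⁻ to ϑ̂, so that v can be written as a function of ϑ with dv/dϑ = ((2−α)/2) √(U(ϑ) − v²). Then the total angular variation satisfies (4/(2−α)) arcsin√(U_min/U_max) ≤ ϑ̂ − ξ⁻ ≤ 2π/(2−α). -/
/-!
Put `c = (2 - α) / 2`. Along a solution of `v' = c √(U - v²)` with `|v| < r`, the function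
`arcsin (v / r)` has derivative `c √(U - v²) / √(r² - v²)`, which is at least `c` when `r² ≤ U`
and at most `c` when `U ≤ r²`. Since `v` runs from `-√U_min` to `√U_min`, the mean value theorem
with `r = √U_min` gives `π ≤ c (ϑ̂ - ξ⁻)`, and with `r = √U_max` it gives
`2 arcsin √(U_min / U_max) ≤ c (ϑ̂ - ξ⁻)`.
-/

open Real Set

theorem HasDerivAt.arcsin_div {f : ℝ → ℝ} {f' r x : ℝ} (hf : HasDerivAt f f' x)
    (hx : |f x| < r) :
    HasDerivAt (fun y => arcsin (f y / r)) (f' / √(r ^ 2 - f x ^ 2)) x := by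
  have hr : 0 < r := (abs_nonneg _).trans_lt hx
  obtain ⟨h₁, h₂⟩ := abs_lt.1 (show |f x / r| < 1 by rwa [abs_div, abs_of_pos hr, div_lt_one hr])
  refine ((hasDerivAt_arcsin h₁.ne' h₂.ne).comp x (hf.div_const r)).congr_deriv ?_
  have hscale : √(1 - (f x / r) ^ 2) * r = √(r ^ 2 - f x ^ 2) :=
    calc √(1 - (f x / r) ^ 2) * r = √(1 - (f x / r) ^ 2) * √(r ^ 2) := by rw [sqrt_sq hr.le]
      _ = √((1 - (f x / r) ^ 2) * r ^ 2) := (sqrt_mul (by nlinarith) _).symm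
      _ = √(r ^ 2 - f x ^ 2) := by congr 1; field_simp
  rw [← hscale]
  field_simp

section ArcsinComparison

variable {U v : ℝ → ℝ} {c r a b : ℝ}

theorem continuousOn_arcsin_div {v' : ℝ → ℝ} {s : Set ℝ}
    (hv : ∀ x ∈ s, HasDerivAt v (v' x) x) :
    ContinuousOn (fun y => arcsin (v y / r)) s :=
  continuous_arcsin.comp_continuousOn ((HasDerivAt.continuousOn hv).div_const r)

theorem arcsin_div_sub_le_mul_sub (hc : 0 ≤ c) (hab : a ≤ b)
    (hv : ∀ x ∈ Icc a b, HasDerivAt v (c * √(U x - v x ^ 2)) x)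
    (hvr : ∀ x ∈ Ioo a b, |v x| < r) (hU : ∀ x ∈ Ioo a b, U x ≤ r ^ 2) :
    arcsin (v b / r) - arcsin (v a / r) ≤ c * (b - a) := by
  have hder x (hx : x ∈ Ioo a b) := (hv x (Ioo_subset_Icc_self hx)).arcsin_div (hvr x hx)
  refine (convex_Icc a b).image_sub_le_mul_sub_of_deriv_le (continuousOn_arcsin_div hv) ?_ ?_
    a (left_mem_Icc.2 hab) b (right_mem_Icc.2 hab) hab <;> rw [interior_Icc]
  · exact fun x hx => (hder x hx).differentiableAt.differentiableWithinAt
  · intro x hx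
    obtain ⟨h₁, h₂⟩ := abs_lt.1 (hvr x hx)
    have hpos : 0 < √(r ^ 2 - v x ^ 2) := sqrt_pos.2 (sub_pos.2 (sq_lt_sq' h₁ h₂))
    rw [(hder x hx).deriv, mul_div_assoc]
    exact mul_le_of_le_one_right hc
      ((div_le_one hpos).2 (sqrt_le_sqrt (by linarith [hU x hx])))

theorem mul_sub_le_arcsin_div_sub (hc : 0 ≤ c) (hab : a ≤ b)
    (hv : ∀ x ∈ Icc a b, HasDerivAt v (c * √(U x - v x ^ 2)) x)
    (hvr : ∀ x ∈ Ioo a b, |v x| < r) (hU : ∀ x ∈ Ioo a b, r ^ 2 ≤ U x) :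
    c * (b - a) ≤ arcsin (v b / r) - arcsin (v a / r) := by
  have hder x (hx : x ∈ Ioo a b) := (hv x (Ioo_subset_Icc_self hx)).arcsin_div (hvr x hx)
  refine (convex_Icc a b).mul_sub_le_image_sub_of_le_deriv (continuousOn_arcsin_div hv) ?_ ?_
    a (left_mem_Icc.2 hab) b (right_mem_Icc.2 hab) hab <;> rw [interior_Icc]
  · exact fun x hx => (hder x hx).differentiableAt.differentiableWithinAt
  · intro x hx
    obtain ⟨h₁, h₂⟩ := abs_lt.1 (hvr x hx)
    have hpos : 0 < √(r ^ 2 - v x ^ 2) := sqrt_pos.2 (sub_pos.2 (sq_lt_sq' h₁ h₂))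
    rw [(hder x hx).deriv, mul_div_assoc]
    exact le_mul_of_one_le_right hc
      ((one_le_div hpos).2 (sqrt_le_sqrt (by linarith [hU x hx])))

end ArcsinComparison

theorem stmt_11_general (α Umin Umax ξ θhat : ℝ) (hα : α ∈ Set.Ioo (0 : ℝ) 2)
    (hlt : ξ < θhat)
    (U v : ℝ → ℝ)
    (hU : ∀ x, Umin ≤ U x ∧ U x ≤ Umax)
    (hv : ∀ x ∈ Set.Icc ξ θhat,
      HasDerivAt v (((2 - α) / 2) * Real.sqrt (U x - (v x) ^ 2)) x)
    (hmono : StrictMonoOn v (Set.Icc ξ θhat))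
    (hva : v ξ = -Real.sqrt Umin) (hvb : v θhat = Real.sqrt Umin) :
    (4 / (2 - α)) * Real.arcsin (Real.sqrt (Umin / Umax)) ≤ θhat - ξ ∧
      θhat - ξ ≤ 2 * Real.pi / (2 - α) := by
  have hc : 0 < 2 - α := by linarith [hα.2]
  have hξ : ξ ∈ Icc ξ θhat := left_mem_Icc.2 hlt.le
  have hθ : θhat ∈ Icc ξ θhat := right_mem_Icc.2 hlt.le
  have hsqrt : 0 < √Umin := by linarith [hva ▸ hvb ▸ hmono hξ hθ hlt]
  have hUmin : 0 < Umin := sqrt_pos.1 hsqrt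
  have hvint (x) (hx : x ∈ Ioo ξ θhat) : |v x| < √Umin :=
    abs_lt.2 ⟨hva ▸ hmono hξ (Ioo_subset_Icc_self hx) hx.1,
      hvb ▸ hmono (Ioo_subset_Icc_self hx) hθ hx.2⟩
  have hUmax : 0 ≤ Umax := hUmin.le.trans ((hU ξ).1.trans (hU ξ).2)
  constructor
  · have h := arcsin_div_sub_le_mul_sub (by positivity) hlt.le hv
      (fun x hx => (hvint x hx).trans_le (sqrt_le_sqrt ((hU x).1.trans (hU x).2)))
      (fun x _ => (sq_sqrt hUmax).symm ▸ (hU x).2)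
    rw [hva, hvb, neg_div, arcsin_neg, ← sqrt_div hUmin.le] at h
    rw [div_mul_eq_mul_div, div_le_iff₀ hc]
    linarith
  · have h := mul_sub_le_arcsin_div_sub (by positivity) hlt.le hv hvint
      (fun x _ => (sq_sqrt hUmin.le).symm ▸ (hU x).1)
    rw [hva, hvb, neg_div, div_self hsqrt.ne', arcsin_neg, arcsin_one] at h
    rw [le_div_iff₀ hc]
    linarith

theorem stmt_11 (α Umin Umax ξ θhat : ℝ) (hα : α ∈ Set.Ioo (0 : ℝ) 2)
    (hUmin : 0 < Umin) (hUmm : Umin ≤ Umax) (hlt : ξ < θhat)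
    (U v : ℝ → ℝ)
    (hU : ∀ x, Umin ≤ U x ∧ U x ≤ Umax)
    (hv : ∀ x ∈ Set.Icc ξ θhat,
      HasDerivAt v (((2 - α) / 2) * Real.sqrt (U x - (v x) ^ 2)) x)
    (hmono : StrictMonoOn v (Set.Icc ξ θhat))
    (hrange : ∀ x ∈ Set.Icc ξ θhat, (v x) ^ 2 ≤ U x)
    (hva : v ξ = -Real.sqrt Umin) (hvb : v θhat = Real.sqrt Umin) :
    (4 / (2 - α)) * Real.arcsin (Real.sqrt (Umin / Umax)) ≤ θhat - ξ ∧
      θhat - ξ ≤ 2 * Real.pi / (2 - α) :=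
  stmt_11_general α Umin Umax ξ θhat hα hlt U v hU hv hmono hva hvb
end

section
/- Let μ > 0, Υ > 0, τ > 0, and choose γ > 0 with γ(γ+1) < μ/Υ². Suppose u, v, r are positive C² functions on [τ, ∞) with r nondecreasing, u(t) → 0 and v(t) → 0 as t → ∞, and satisfying the differential inequalities ü + 2(ṙ/r) u̇ ≤ (γ(γ+1)/t²) u and v̈ + 2(ṙ/r) v̇ ≥ (μ/(Υ² t²)) v on [τ, ∞). Then u(t) ≥ (u(τ)/v(τ)) v(t) for all t ≥ τ. -/
/-!
With `c = u τ / v τ`, the function `w = u - c v` vanishes at `τ` and at infinity. If it were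
negative somewhere, it would attain a negative minimum at some `s > τ`. There `w' s = 0`, so the
drift terms `b u'` and `c b v'` cancel, and `w'' s ≥ 0`; but the two differential inequalities
give `w'' s ≤ k u - c m v ≤ (k - m) c v < 0` because `0 ≤ k < m` and `u < c v` at `s`.
-/

open Set Filter Topology

lemma IsLocalMin.nonneg_of_hasDerivAt_of_hasDerivAt {f f' : ℝ → ℝ} {a f'' : ℝ}
    (h : IsLocalMin f a) (hf : ∀ᶠ x in 𝓝 a, HasDerivAt f (f' x) x) (hf' : HasDerivAt f' f'' a) :
    0 ≤ f'' := by
  by_contra! hneg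
  have hcrit : f' a = 0 := h.hasDerivAt_eq_zero hf.self_of_nhds
  have hdecr : ∀ᶠ x in 𝓝[>] a, f' x < 0 := by
    have hslope := ((hasDerivAt_iff_tendsto_slope.mp hf').mono_left
      (nhdsGT_le_nhdsNE a)).eventually (gt_mem_nhds hneg)
    filter_upwards [hslope, self_mem_nhdsWithin] with x hx (hax : a < x)
    rw [slope_def_field, hcrit, sub_zero] at hx
    rwa [div_lt_iff₀ (sub_pos.2 hax), zero_mul] at hx
  obtain ⟨b, hab, hsub⟩ := mem_nhdsGT_iff_exists_Ioo_subset.mp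
    (hdecr.and (nhdsWithin_le_nhds (hf.and h)))
  obtain ⟨c, hac, hcb⟩ := exists_between (mem_Ioi.mp hab)
  have hcont : ContinuousOn f (Icc a c) := by
    intro x hx
    rcases hx.1.eq_or_lt with rfl | hax
    · exact hf.self_of_nhds.continuousAt.continuousWithinAt
    · exact (hsub ⟨hax, hx.2.trans_lt hcb⟩).2.1.continuousAt.continuousWithinAt
  obtain ⟨ξ, hξ, hmvt⟩ := exists_hasDerivAt_eq_slope f f' hac hcont
    fun x hx => (hsub ⟨hx.1, hx.2.trans hcb⟩).2.1
  have hfc : f a ≤ f c := (hsub ⟨hac, hcb⟩).2.2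
  have hξneg : f' ξ < 0 := (hsub ⟨hξ.1, hξ.2.trans hcb⟩).1
  rw [hmvt, div_lt_iff₀ (sub_pos.2 hac), zero_mul] at hξneg
  linarith

lemma nonneg_of_tendsto_atTop_zero_of_isLocalMin {w : ℝ → ℝ} {τ : ℝ}
    (hw : ContinuousOn w (Ici τ)) (hτ : 0 ≤ w τ) (hlim : Tendsto w atTop (𝓝 0))
    (hmin : ∀ s ∈ Ioi τ, IsLocalMin w s → 0 ≤ w s) :
    ∀ t ∈ Ici τ, 0 ≤ w t := by
  intro t ht
  by_contra! hneg
  obtain ⟨T, hT⟩ := eventually_atTop.mp (hlim.eventually (lt_mem_nhds hneg))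
  obtain ⟨s, hs, hsmin⟩ := isCompact_Icc.exists_isMinOn
    (nonempty_Icc.2 (ht.trans (le_max_right T t))) (hw.mono Icc_subset_Ici_self)
  have hst : w s ≤ w t := hsmin ⟨ht, le_max_right _ _⟩
  have hτs : τ < s := hs.1.lt_of_ne (by rintro rfl; linarith)
  have hsT : s < max T t :=
    hs.2.lt_of_ne (by rintro rfl; linarith [hT (max T t) (le_max_left _ _)])
  linarith [hmin s hτs (hsmin.isLocalMin (Icc_mem_nhds hτs hsT))]

theorem mul_le_of_secondOrder_comparison {τ c : ℝ} {u u' u'' v v' v'' b k m : ℝ → ℝ}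
    (hu : ∀ t ∈ Ici τ, HasDerivAt u (u' t) t) (hu' : ∀ t ∈ Ioi τ, HasDerivAt u' (u'' t) t)
    (hv : ∀ t ∈ Ici τ, HasDerivAt v (v' t) t) (hv' : ∀ t ∈ Ioi τ, HasDerivAt v' (v'' t) t)
    (hc : 0 < c) (hτ : c * v τ ≤ u τ) (hv_pos : ∀ t ∈ Ioi τ, 0 < v t)
    (hk : ∀ t ∈ Ioi τ, 0 ≤ k t) (hkm : ∀ t ∈ Ioi τ, k t < m t)
    (hu_ineq : ∀ t ∈ Ioi τ, u'' t + b t * u' t ≤ k t * u t)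
    (hv_ineq : ∀ t ∈ Ioi τ, m t * v t ≤ v'' t + b t * v' t)
    (hu0 : Tendsto u atTop (𝓝 0)) (hv0 : Tendsto v atTop (𝓝 0)) :
    ∀ t ∈ Ici τ, c * v t ≤ u t := by
  have hw : ∀ t ∈ Ici τ, HasDerivAt (fun t ↦ u t - c * v t) (u' t - c * v' t) t :=
    fun t ht ↦ (hu t ht).sub ((hv t ht).const_mul c)
  refine fun t ht ↦ sub_nonneg.1 (nonneg_of_tendsto_atTop_zero_of_isLocalMin
    (fun t ht ↦ (hw t ht).continuousAt.continuousWithinAt) (sub_nonneg.2 hτ)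
    (by simpa using hu0.sub (hv0.const_mul c)) ?_ t ht)
  intro s hs hmin
  by_contra! hneg
  have hcrit : u' s - c * v' s = 0 := hmin.hasDerivAt_eq_zero (hw s (Ioi_subset_Ici_self hs))
  have hconvex : 0 ≤ u'' s - c * v'' s :=
    hmin.nonneg_of_hasDerivAt_of_hasDerivAt
      (eventually_of_mem (Ioi_mem_nhds hs) fun x hx ↦ hw x (Ioi_subset_Ici_self hx))
      ((hu' s hs).sub ((hv' s hs).const_mul c))
  have hconcave : u'' s - c * v'' s < 0 := calc
    u'' s - c * v'' s ≤ k s * u s - c * (m s * v s) := by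
      linear_combination hu_ineq s hs + c * hv_ineq s hs - b s * hcrit
    _ ≤ k s * (c * v s) - c * (m s * v s) := by gcongr; exacts [hk s hs, by linarith]
    _ = (k s - m s) * (c * v s) := by ring
    _ < 0 := mul_neg_of_neg_of_pos (sub_neg.2 (hkm s hs)) (mul_pos hc (hv_pos s hs))
  linarith

theorem stmt_17_general (μ Υ τ γ : ℝ) (hτ : 0 < τ) (hγ : 0 < γ)
    (hcomp : γ * (γ + 1) < μ / Υ ^ 2)
    (u u' u'' v v' v'' r r' : ℝ → ℝ)
    (hu : ∀ t ∈ Set.Ici τ, HasDerivAt u (u' t) t)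
    (hu' : ∀ t ∈ Set.Ici τ, HasDerivAt u' (u'' t) t)
    (hv : ∀ t ∈ Set.Ici τ, HasDerivAt v (v' t) t)
    (hv' : ∀ t ∈ Set.Ici τ, HasDerivAt v' (v'' t) t)
    (hupos : ∀ t ∈ Set.Ici τ, 0 < u t)
    (hvpos : ∀ t ∈ Set.Ici τ, 0 < v t)
    (hu0 : Filter.Tendsto u Filter.atTop (nhds 0))
    (hv0 : Filter.Tendsto v Filter.atTop (nhds 0))
    (hineq_u : ∀ t ∈ Set.Ici τ,
      u'' t + 2 * (r' t / r t) * u' t ≤ (γ * (γ + 1) / t ^ 2) * u t)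
    (hineq_v : ∀ t ∈ Set.Ici τ,
      v'' t + 2 * (r' t / r t) * v' t ≥ (μ / (Υ ^ 2 * t ^ 2)) * v t) :
    ∀ t ∈ Set.Ici τ, u t ≥ (u τ / v τ) * v t := by
  have hvτ : 0 < v τ := hvpos τ self_mem_Ici
  refine mul_le_of_secondOrder_comparison (b := fun t ↦ 2 * (r' t / r t))
    (k := fun t ↦ γ * (γ + 1) / t ^ 2) (m := fun t ↦ μ / (Υ ^ 2 * t ^ 2))
    hu (fun t ht ↦ hu' t (Ioi_subset_Ici_self ht)) hv (fun t ht ↦ hv' t (Ioi_subset_Ici_self ht))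
    (div_pos (hupos τ self_mem_Ici) hvτ) (div_mul_cancel₀ _ hvτ.ne').le
    (fun t ht ↦ hvpos t (Ioi_subset_Ici_self ht)) (fun t _ ↦ by positivity) ?_
    (fun t ht ↦ hineq_u t (Ioi_subset_Ici_self ht)) (fun t ht ↦ hineq_v t (Ioi_subset_Ici_self ht)) hu0 hv0
  intro t ht
  have ht2 : 0 < t ^ 2 := pow_pos (hτ.trans ht) 2
  rw [← div_div]
  exact div_lt_div_of_pos_right hcomp ht2

theorem stmt_17 (μ Υ τ γ : ℝ) (hμ : 0 < μ) (hΥ : 0 < Υ) (hτ : 0 < τ) (hγ : 0 < γ)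
    (hcomp : γ * (γ + 1) < μ / Υ ^ 2)
    (u u' u'' v v' v'' r r' : ℝ → ℝ)
    (hu : ∀ t ∈ Set.Ici τ, HasDerivAt u (u' t) t)
    (hu' : ∀ t ∈ Set.Ici τ, HasDerivAt u' (u'' t) t)
    (hv : ∀ t ∈ Set.Ici τ, HasDerivAt v (v' t) t)
    (hv' : ∀ t ∈ Set.Ici τ, HasDerivAt v' (v'' t) t)
    (hrder : ∀ t ∈ Set.Ici τ, HasDerivAt r (r' t) t)
    (hupos : ∀ t ∈ Set.Ici τ, 0 < u t)
    (hvpos : ∀ t ∈ Set.Ici τ, 0 < v t)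
    (hrpos : ∀ t ∈ Set.Ici τ, 0 < r t)
    (hrmono : ∀ t ∈ Set.Ici τ, 0 ≤ r' t)
    (hu0 : Filter.Tendsto u Filter.atTop (nhds 0))
    (hv0 : Filter.Tendsto v Filter.atTop (nhds 0))
    (hineq_u : ∀ t ∈ Set.Ici τ,
      u'' t + 2 * (r' t / r t) * u' t ≤ (γ * (γ + 1) / t ^ 2) * u t)
    (hineq_v : ∀ t ∈ Set.Ici τ,
      v'' t + 2 * (r' t / r t) * v' t ≥ (μ / (Υ ^ 2 * t ^ 2)) * v t) :
    ∀ t ∈ Set.Ici τ, u t ≥ (u τ / v τ) * v t :=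
  stmt_17_general μ Υ τ γ hτ hγ hcomp u u' u'' v v' v'' r r' hu hu' hv hv' hupos hvpos hu0 hv0
    hineq_u hineq_v
end
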